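/- Let K be a cycle-free Markov kernel on a countable set G having the Liouville property, and let F be the CMT with kernel K (law ℙ_G). Then the connected components of F are indistinguishable by tail branch-properties: for every tail branch-property A ⊆ G × G^G, either Q_G(A) = 0 or Q_G((G × G^G) ∖ A) = 0; equivalently, either ℙ_G-almost surely (v,F) ∈ A for every v ∈ G, or ℙ_G-almost surely (v,F) ∉ A for every v ∈ G. -/

import Mathlib

open MeasureTheory ENNReal

namespace CMTPaper

variable {G : Type*}

/-- The `n`-step kernel of a Markov kernel `K` on a countable set `G`:
`K^0(x,·) = δ_x` and `K^{n+1}(x,A) = Σ_y K(x,{y})·K^n(y,A)`. -/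
noncomputable def nStep [MeasurableSpace G] (K : G → Measure G) : ℕ → G → Measure G
  | 0 => fun x => Measure.dirac x
  | n + 1 => fun x => Measure.sum fun y => K x {y} • nStep K n y

/-- A kernel is cycle-free if `K^m(x,{x}) = 0` for every `x` and every `m ≥ 1`. -/
def CycleFree [MeasurableSpace G] (K : G → Measure G) : Prop :=
  ∀ x : G, ∀ m : ℕ, 1 ≤ m → nStep K m x {x} = 0

/-- `P` is the law on path space `G^ℕ` of the Markov chain with kernel `K` started at `x`
(characterized by its finite-dimensional cylinder probabilities). -/
def IsPathLaw [MeasurableSpace G] (K : G → Measure G) (x : G) (P : Measure (ℕ → G)) : Prop :=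
  ∀ (n : ℕ) (u : ℕ → G), u 0 = x →
    P {ω | ∀ i ≤ n, ω i = u i} = ∏ i ∈ Finset.range n, K (u i) {u (i + 1)}

/-- The set of collisions of two paths: pairs `(m,n)` with `m,n ≥ 1` and `ω m = ω' n`. -/
def collisions (ω ω' : ℕ → G) : Set (ℕ × ℕ) :=
  {p : ℕ × ℕ | 1 ≤ p.1 ∧ 1 ≤ p.2 ∧ ω p.1 = ω' p.2}

/-- `μ` is the law on `G^G` of the coalescing Markov trajectories (CMT) with kernel `K`,
i.e. the product measure `⊗_x K(x,·)` (characterized on cylinders). -/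
def IsCMTLaw [MeasurableSpace G] (K : G → Measure G) (μ : Measure (G → G)) : Prop :=
  ∀ (s : Finset G) (u : G → G), μ {f | ∀ x ∈ s, f x = u x} = ∏ x ∈ s, K x {u x}

/-- Adjacency in the graph of `f`: an edge between `x` and `f x` for every `x`. -/
def Adj (f : G → G) (a b : G) : Prop := f a = b ∨ f b = a

/-- `a` and `b` lie in the same connected component of the graph of `f`. -/
def SameComponent (f : G → G) (a b : G) : Prop := Relation.ReflTransGen (Adj f) a b

/-- The connected component of `v` in the graph of `f`. -/
def component (f : G → G) (v : G) : Set G := {u | SameComponent f u v}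

/-- The level set of `v`: points whose forward orbit merges with that of `v` after the same
number of steps. -/
def levelSet (f : G → G) (v : G) : Set G := {w | ∃ n : ℕ, f^[n] w = f^[n] v}

/-- The ancestor-line map `π (v, f) = (f^{(n)}(v))_{n ≥ 0}`. -/
def ancLine : G × (G → G) → ℕ → G := fun p n => p.2^[n] p.1

/-- Total-variation distance between two measures on a countable discrete space. -/
noncomputable def tvDist [MeasurableSpace G] (ν₁ ν₂ : Measure G) : ℝ≥0∞ :=
  ∑' y : G, ((ν₁ {y} - ν₂ {y}) + (ν₂ {y} - ν₁ {y}))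

/-- The mass `‖ν₁ ∧ ν₂‖ = Σ_y min(ν₁{y}, ν₂{y})` of the meet of two measures. -/
noncomputable def meetMass [MeasurableSpace G] (ν₁ ν₂ : Measure G) : ℝ≥0∞ :=
  ∑' y : G, min (ν₁ {y}) (ν₂ {y})

/-- The shift on path space, `σ (x_i)_{i≥0} = (x_{i+1})_{i≥0}`. -/
def shift : (ℕ → G) → ℕ → G := fun ω i => ω (i + 1)

/-- An invariant path property: a measurable shift-invariant subset of path space. -/
def IsInvariantPathProperty [MeasurableSpace G] (A : Set (ℕ → G)) : Prop :=
  MeasurableSet A ∧ shift ⁻¹' A = A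

/-- The tail σ-algebra `⋂_n σ((x_i)_{i ≥ n})` on path space. -/
def tailMS (G : Type*) [MeasurableSpace G] : MeasurableSpace (ℕ → G) :=
  ⨅ n : ℕ, MeasurableSpace.comap (fun ω : ℕ → G => fun i => ω (n + i)) inferInstance

/-- A tail path property: a set in the tail σ-algebra of path space. -/
def IsTailPathProperty [MeasurableSpace G] (A : Set (ℕ → G)) : Prop :=
  MeasurableSet[tailMS G] A

/-- A function `h` is `K`-harmonic if `h(x) = Σ_y K(x,{y}) h(y)` for every `x`. -/
def IsKHarmonic [MeasurableSpace G] (K : G → Measure G) (h : G → ℝ) : Prop :=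
  ∀ x : G, h x = ∑' y : G, (K x {y}).toReal * h y

/-- `K` has the Liouville property: every bounded `K`-harmonic function is constant. -/
def LiouvilleProperty [MeasurableSpace G] (K : G → Measure G) : Prop :=
  ∀ h : G → ℝ, (∃ C : ℝ, ∀ x, |h x| ≤ C) → IsKHarmonic K h → ∀ x y : G, h x = h y

/-- Adjacency within a vertex subset `S` of the graph of `f`. -/
def AdjIn (f : G → G) (S : Set G) (a b : G) : Prop := Adj f a b ∧ a ∈ S ∧ b ∈ S

/-- The connected component of `a` in the subgraph of the graph of `f` induced by `S`. -/
def compIn (f : G → G) (S : Set G) (a : G) : Set G :=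
  {b | Relation.ReflTransGen (AdjIn f S) a b}

/-- `B` is a branch of the component of `v`: a connected component of `C_f(v) ∖ U` for some
finite set `U` of vertices. -/
def IsBranch (f : G → G) (v : G) (B : Set G) : Prop :=
  ∃ U : Set G, U.Finite ∧ ∃ a ∈ component f v \ U, B = compIn f (component f v \ U) a

/-- `B` is an ancestral branch of the component of `v`: a branch that eventually contains
the forward orbit of `v`. -/
def IsAncestralBranch (f : G → G) (v : G) (B : Set G) : Prop :=
  IsBranch f v B ∧ ∃ N : ℕ, ∀ n ≥ N, f^[n] v ∈ B

/-- `f` and `f'` share a common ancestral branch of the component of `v`, on which they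
coincide. -/
def SharesAncestralBranch (v : G) (f f' : G → G) : Prop :=
  ∃ B : Set G, IsAncestralBranch f v B ∧ IsAncestralBranch f' v B ∧ Set.EqOn f f' B

/-- A component-property: a measurable subset of `G × G^G` invariant under moving the root
within its connected component. -/
def IsComponentProperty [MeasurableSpace G] (A : Set (G × (G → G))) : Prop :=
  MeasurableSet A ∧
  ∀ (f : G → G) (v v' : G), SameComponent f v v' → ((v, f) ∈ A ↔ (v', f) ∈ A)

/-- A level-set-property: a measurable subset of `G × G^G` invariant under moving the root
within its level set. -/
def IsLevelSetProperty [MeasurableSpace G] (A : Set (G × (G → G))) : Prop :=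
  MeasurableSet A ∧
  ∀ (f : G → G) (v v' : G), v' ∈ levelSet f v → ((v, f) ∈ A ↔ (v', f) ∈ A)

/-- A tail branch-property: a component-property insensitive to finite modifications that
preserve a common ancestral branch. -/
def IsTailBranchProperty [MeasurableSpace G] (A : Set (G × (G → G))) : Prop :=
  IsComponentProperty A ∧
  ∀ (v : G) (f f' : G → G), {x | f x ≠ f' x}.Finite → SharesAncestralBranch v f f' →
    ((v, f) ∈ A ↔ (v, f') ∈ A)

/-- A tail level-set-property: a level-set-property insensitive to finite modifications that
modify the level set of the root at only finitely many points. -/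
def IsTailLevelSetProperty [MeasurableSpace G] (A : Set (G × (G → G))) : Prop :=
  IsLevelSetProperty A ∧
  ∀ (v : G) (f f' : G → G), {x | f x ≠ f' x}.Finite →
    (symmDiff (levelSet f v) (levelSet f' v)).Finite →
    ((v, f) ∈ A ↔ (v, f') ∈ A)

/-!
Write `A_v` for the section `{f | (v, f) ∈ A}`. Cycle-freeness makes the CMT a.s. free of periodic
points, and a point `z` that is reachable from `x` a.s. never returns to `x`. Fixing the orbit of
`v` up to time `n` identifies `A_v` with `A_z` for the endpoint `z`, and `A_z` is then decided by
the coordinates off the finite prefix; as coordinates are independent,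
`μ (A_v ∩ prefix) = μ A_z * μ prefix`. The one-step case says that `x ↦ μ A_x` is harmonic, hence
constant by the Liouville property. Letting the prefix grow shows that `A_z` is independent of the
event that the orbit of `z` avoids a finite set `t`, and cutting the orbit of `v` after its last
visit to `t` then shows that `A_v` is independent of every event depending only on the coordinates
in `t`. By the zero-one law `μ A_v ∈ {0, 1}`, with the same value for every `v`.
-/

section PointCylinder

variable {ι α : Type*}

def pointCylinder (t : Finset ι) (w : ι → α) : Set (ι → α) := {f | ∀ i ∈ t, f i = w i}

lemma isPiSystem_pointCylinder :
    IsPiSystem {S : Set (ι → α) | ∃ t w, S = pointCylinder t w} := by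
  classical
  rintro _ ⟨t₁, w₁, rfl⟩ _ ⟨t₂, w₂, rfl⟩ ⟨f₀, hf₁, hf₂⟩
  refine ⟨t₁ ∪ t₂, f₀, Set.ext fun g => ⟨?_, fun hg => ⟨?_, ?_⟩⟩⟩
  · rintro ⟨hg₁, hg₂⟩ i hi
    rcases Finset.mem_union.mp hi with h | h
    · rw [hg₁ i h, hf₁ i h]
    · rw [hg₂ i h, hf₂ i h]
  · intro i hi; rw [hg i (Finset.mem_union_left _ hi), hf₁ i hi]
  · intro i hi; rw [hg i (Finset.mem_union_right _ hi), hf₂ i hi]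

variable [MeasurableSpace α] [MeasurableSingletonClass α]

lemma measurableSet_pointCylinder (t : Finset ι) (w : ι → α) :
    MeasurableSet (pointCylinder t w) := by
  simp only [pointCylinder, Set.ofPred_forall]
  exact .biInter t.countable_toSet fun i _ => measurable_pi_apply i (measurableSet_singleton _)

lemma generateFrom_pointCylinder [Countable α] :
    MeasurableSpace.generateFrom {S : Set (ι → α) | ∃ t w, S = pointCylinder t w} =
      MeasurableSpace.pi := by
  refine le_antisymm (MeasurableSpace.generateFrom_le ?_) (iSup_le fun i => ?_)
  · rintro _ ⟨t, w, rfl⟩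
    exact measurableSet_pointCylinder t w
  · rw [MeasurableSpace.comap_le_iff_le_map]
    intro S _
    have hS : (fun f : ι → α => f i) ⁻¹' S = ⋃ a ∈ S, pointCylinder {i} fun _ => a := by
      ext; simp [pointCylinder]
    show MeasurableSet[MeasurableSpace.generateFrom _] ((fun f : ι → α => f i) ⁻¹' S)
    rw [hS]
    exact .biUnion S.to_countable fun a _ =>
      MeasurableSpace.measurableSet_generateFrom ⟨{i}, _, rfl⟩

lemma ext_of_pointCylinder [Countable α] {μ ν : Measure (ι → α)} [IsFiniteMeasure μ]
    (h : ∀ t w, μ (pointCylinder t w) = ν (pointCylinder t w)) : μ = ν := by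
  refine ext_of_generate_finite _ generateFrom_pointCylinder.symm isPiSystem_pointCylinder
    (by rintro _ ⟨t, w, rfl⟩; exact h t w) ?_
  obtain hempty | ⟨⟨w⟩⟩ := isEmpty_or_nonempty (ι → α)
  · simp [Set.univ_eq_empty_iff.mpr hempty]
  · simpa [pointCylinder] using h ∅ w

end PointCylinder

section Independence

variable [MeasurableSpace G] {K : G → Measure G} {μ : Measure (G → G)}

lemma IsCMTLaw.measure_pointCylinder (hμ : IsCMTLaw K μ) (t : Finset G) (w : G → G) :
    μ (pointCylinder t w) = ∏ x ∈ t, K x {w x} :=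
  hμ t w

lemma IsCMTLaw.measure_setOf_apply_eq (hμ : IsCMTLaw K μ) (x y : G) :
    μ {f | f x = y} = K x {y} := by
  simpa using hμ {x} fun _ => y

lemma measurable_piecewise_prod (S : Set G) [DecidablePred (· ∈ S)] :
    Measurable fun p : (G → G) × (G → G) => S.piecewise p.2 p.1 := by
  refine measurable_pi_lambda _ fun x => ?_
  by_cases hx : x ∈ S
  · simpa [Set.piecewise, hx] using measurable_snd.eval
  · simpa [Set.piecewise, hx] using measurable_fst.eval

variable [Countable G] [MeasurableSingletonClass G]

lemma IsCMTLaw.map_piecewise_prod [IsProbabilityMeasure μ] (hμ : IsCMTLaw K μ) (S : Set G)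
    [DecidablePred (· ∈ S)] :
    (μ.prod μ).map (fun p => S.piecewise p.2 p.1) = μ := by
  refine ext_of_pointCylinder fun t w => ?_
  have hpre : (fun p : (G → G) × (G → G) => S.piecewise p.2 p.1) ⁻¹' pointCylinder t w =
      pointCylinder (t.filter (· ∉ S)) w ×ˢ pointCylinder (t.filter (· ∈ S)) w := by
    ext p
    simp only [pointCylinder, Set.mem_preimage, Set.mem_ofPred_eq, Set.mem_prod,
      Finset.mem_filter, and_imp, ← forall_and]
    exact forall_congr' fun x => by by_cases hxS : x ∈ S <;> simp [hxS]
  rw [Measure.map_apply (measurable_piecewise_prod S) (measurableSet_pointCylinder t w), hpre,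
    Measure.prod_prod, hμ.measure_pointCylinder, hμ.measure_pointCylinder,
    hμ.measure_pointCylinder, mul_comm]
  exact Finset.prod_filter_mul_prod_filter_not t (· ∈ S) _

lemma IsCMTLaw.measure_inter_eq_mul [IsProbabilityMeasure μ] (hμ : IsCMTLaw K μ) {S : Set G}
    {D E : Set (G → G)} (hD : MeasurableSet D) (hE : MeasurableSet E)
    (hDS : DependsOn (· ∈ D) Sᶜ) (hES : DependsOn (· ∈ E) S) :
    μ (D ∩ E) = μ D * μ E := by
  classical
  -- Resampling the coordinates in `S` from an independent copy preserves `μ` and pulls `D ∩ E`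
  -- back to the rectangle `D ×ˢ E`.
  have hpre : (fun p : (G → G) × (G → G) => S.piecewise p.2 p.1) ⁻¹' (D ∩ E) = D ×ˢ E := by
    ext p
    have h₁ : (S.piecewise p.2 p.1 ∈ D) = (p.1 ∈ D) :=
      hDS fun x hx => Set.piecewise_eq_of_notMem _ _ _ hx
    have h₂ : (S.piecewise p.2 p.1 ∈ E) = (p.2 ∈ E) :=
      hES fun x hx => Set.piecewise_eq_of_mem _ _ _ hx
    simp [h₁, h₂]
  calc μ (D ∩ E) = (μ.prod μ).map (fun p => S.piecewise p.2 p.1) (D ∩ E) := by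
        rw [hμ.map_piecewise_prod]
    _ = μ D * μ E := by
        rw [Measure.map_apply (measurable_piecewise_prod S) (hD.inter hE), hpre,
          Measure.prod_prod]

end Independence

section Graph

variable {f f' : G → G} {S : Set G} {y : G}

lemma SameComponent.symm {a b : G} (h : SameComponent f a b) : SameComponent f b a := by
  induction h with
  | refl => exact .refl
  | tail _ hbc ih => exact .head (Or.symm hbc) ih

lemma sameComponent_iterate (f : G → G) (y : G) (n : ℕ) : SameComponent f y (f^[n] y) := by
  induction n with
  | zero => exact .refl
  | succ n ih => exact ih.tail (Or.inl (Function.iterate_succ_apply' f n y).symm)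

lemma iterate_eq_of_eqOn (h : Set.EqOn f f' S) {n : ℕ} (hy : ∀ k < n, f^[k] y ∈ S) :
    f^[n] y = f'^[n] y := by
  induction n with
  | zero => rfl
  | succ n ih =>
    rw [Function.iterate_succ_apply', Function.iterate_succ_apply',
      ← ih fun k hk => hy k (by omega), h (hy n n.lt_succ_self)]

lemma compIn_subset_of_eqOn_compl (h : Set.EqOn f f' Sᶜ) :
    compIn f (component f y \ S) y ⊆ compIn f' (component f' y \ S) y := by
  intro b hb
  induction hb with
  | refl => exact .refl
  | @tail b c _ hbc ih =>
    obtain ⟨hadj, ⟨-, hbS⟩, ⟨-, hcS⟩⟩ := hbc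
    have hadj' : Adj f' b c := by
      rwa [Adj, ← h hbS, ← h hcS]
    have hb' : SameComponent f' y b := Relation.ReflTransGen.mono (fun _ _ hr => hr.1) _ _ ih
    exact ih.tail ⟨hadj', ⟨hb'.symm, hbS⟩, ⟨SameComponent.symm (hb'.tail hadj'), hcS⟩⟩

lemma isAncestralBranch_compIn (hS : S.Finite) (hy : ∀ n, f^[n] y ∉ S) :
    IsAncestralBranch f y (compIn f (component f y \ S) y) := by
  have horbit : ∀ n, f^[n] y ∈ compIn f (component f y \ S) y := by
    intro n
    induction n with
    | zero => exact .refl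
    | succ n ih =>
      refine ih.tail ⟨Or.inl (Function.iterate_succ_apply' f n y).symm, ?_, ?_⟩
      · exact ⟨(sameComponent_iterate f y n).symm, hy n⟩
      · exact ⟨(sameComponent_iterate f y (n + 1)).symm, hy (n + 1)⟩
  exact ⟨⟨S, hS, y, ⟨.refl, hy 0⟩, rfl⟩, 0, fun n _ => horbit n⟩

lemma IsComponentProperty.preimage_inter_eq [MeasurableSpace G] {B : Set (G × (G → G))}
    (hB : IsComponentProperty B) {v z : G} {E : Set (G → G)} (hE : ∀ f ∈ E, SameComponent f v z) :
    Prod.mk v ⁻¹' B ∩ E = Prod.mk z ⁻¹' B ∩ E :=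
  Set.inter_congr_right (fun f ⟨hf, hfE⟩ => (hB.2 f v z (hE f hfE)).2 hf)
    (fun f ⟨hf, hfE⟩ => (hB.2 f v z (hE f hfE)).1 hf)

/-- The branch of `y` in the complement of `S` is a common ancestral branch of `f` and `f'`. -/
lemma IsTailBranchProperty.mem_iff_of_eqOn_compl [MeasurableSpace G]
    {A : Set (G × (G → G))} (hA : IsTailBranchProperty A) (hS : S.Finite)
    (h : Set.EqOn f f' Sᶜ) (hy : ∀ n, f^[n] y ∉ S) :
    (y, f) ∈ A ↔ (y, f') ∈ A := by
  have horbit : ∀ n, f^[n] y = f'^[n] y := fun n => iterate_eq_of_eqOn h fun k _ => hy k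
  have hy' : ∀ n, f'^[n] y ∉ S := fun n => horbit n ▸ hy n
  have hB : compIn f (component f y \ S) y = compIn f' (component f' y \ S) y :=
    (compIn_subset_of_eqOn_compl h).antisymm (compIn_subset_of_eqOn_compl h.symm)
  have hBS : compIn f (component f y \ S) y ⊆ Sᶜ := by
    intro b hb
    induction hb with
    | refl => exact hy 0
    | tail _ hbc _ => exact hbc.2.2.2
  refine hA.2 y f f' (hS.subset fun x hx => by_contra fun hxS => hx (h hxS))
    ⟨_, isAncestralBranch_compIn hS hy, hB ▸ isAncestralBranch_compIn hS hy', h.mono hBS⟩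

end Graph

section OrbitEvents

def orbitAvoids (S : Set G) (z : G) : Set (G → G) := {f | ∀ n, f^[n] z ∉ S}

def orbitPrefix (v : G) (n : ℕ) (f : G → G) : Fin (n + 1) → G := fun k => f^[k] v

lemma orbitAvoids_union (S S' : Set G) (z : G) :
    orbitAvoids (S ∪ S') z = orbitAvoids S z ∩ orbitAvoids S' z := by
  ext f
  simp only [orbitAvoids, Set.mem_union, not_or, Set.mem_inter_iff, Set.mem_ofPred_eq]
  exact forall_and

lemma dependsOn_mem_of_forall_imp {ι α : Type*} {D : Set (ι → α)} {s : Set ι}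
    (h : ∀ ⦃f g : ι → α⦄, (∀ i ∈ s, f i = g i) → f ∈ D → g ∈ D) : DependsOn (· ∈ D) s :=
  fun _ _ hfg => propext ⟨(h hfg ·), (h (fun i hi => (hfg i hi).symm) ·)⟩

lemma dependsOn_setOf_apply_eq (x y : G) : DependsOn (· ∈ {f : G → G | f x = y}) {x} :=
  dependsOn_mem_of_forall_imp fun _ g hfg hf => show g x = y from hfg x rfl ▸ hf

lemma dependsOn_orbitAvoids (S : Set G) (z : G) : DependsOn (· ∈ orbitAvoids S z) Sᶜ :=
  dependsOn_mem_of_forall_imp fun _ _ hfg hf n =>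
    iterate_eq_of_eqOn (fun _ hx => hfg _ hx) (fun k _ => hf k) ▸ hf n

lemma IsTailBranchProperty.dependsOn_inter_orbitAvoids [MeasurableSpace G]
    {A : Set (G × (G → G))} (hA : IsTailBranchProperty A) {S : Set G} (hS : S.Finite) (z : G) :
    DependsOn (· ∈ Prod.mk z ⁻¹' A ∩ orbitAvoids S z) Sᶜ :=
  dependsOn_mem_of_forall_imp fun _ _ hfg ⟨hzA, hz⟩ =>
    ⟨(hA.mem_iff_of_eqOn_compl hS (fun _ hx => hfg _ hx) hz).1 hzA,
      (dependsOn_orbitAvoids S z hfg).mp hz⟩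

lemma dependsOn_orbitPrefix_fiber (v : G) (n : ℕ) (e : Fin (n + 1) → G) :
    DependsOn (· ∈ orbitPrefix v n ⁻¹' {e}) (Set.range fun k : Fin n => e k.castSucc) := by
  refine dependsOn_mem_of_forall_imp fun f g hfg (hf : orbitPrefix v n f = e) => ?_
  have hfe (k : Fin (n + 1)) : f^[k] v = e k := congrFun hf k
  refine funext fun k => (hfe k) ▸ (iterate_eq_of_eqOn (fun _ hx => hfg _ hx) ?_).symm
  exact fun j hj => ⟨⟨j, by omega⟩, (hfe ⟨j, by omega⟩).symm⟩

lemma injective_iterate_of_periodicPts_eq_empty {f : G → G} (hf : Function.periodicPts f = ∅)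
    (x : G) : Function.Injective (f^[·] x) := by
  have key {i j : ℕ} (hij : i < j) (h : f^[i] x = f^[j] x) : False := by
    refine Set.notMem_empty (f^[i] x)
      (hf ▸ Function.mk_mem_periodicPts (Nat.sub_pos_of_lt hij) ?_)
    change f^[j - i] (f^[i] x) = f^[i] x
    rw [← Function.iterate_add_apply, Nat.sub_add_cancel hij.le, h]
  intro i j h
  by_contra hne
  rcases Nat.lt_or_gt_of_ne hne with hij | hij
  exacts [key hij h, key hij h.symm]

lemma injOn_iterate_apply_of_injOn_succ {f : G → G} {x : G} {n : ℕ}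
    (h : Set.InjOn (f^[·] x) (Set.Iio (n + 1))) :
    Set.InjOn (f^[·] (f x)) (Set.Iio n) ∧ ∀ k < n, f^[k] (f x) ≠ x := by
  refine ⟨fun i hi j hj hij => ?_, fun k hk hkx => ?_⟩
  · exact Nat.succ_injective (h (Nat.succ_lt_succ hi) (Nat.succ_lt_succ hj)
      (by simpa only [Function.iterate_succ_apply] using hij))
  · exact Nat.succ_ne_zero k (h (Nat.succ_lt_succ hk) (Nat.succ_pos n)
      (by simpa [Function.iterate_succ_apply] using hkx))

lemma sameComponent_of_mem_orbitPrefix_fiber {v : G} {n : ℕ} {e : Fin (n + 1) → G} {f : G → G}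
    (hf : f ∈ orbitPrefix v n ⁻¹' {e}) : SameComponent f v (e (Fin.last n)) :=
  congrFun hf (Fin.last n) ▸ sameComponent_iterate f v n

variable [Countable G] [MeasurableSpace G] [MeasurableSingletonClass G]

lemma measurable_iterate_apply (x : G) : ∀ n : ℕ, Measurable fun f : G → G => f^[n] x
  | 0 => measurable_const
  | n + 1 => by
    simp only [Function.iterate_succ_apply']
    exact (measurable_from_prod_countable_left (f := fun p : (G → G) × G => p.1 p.2)
      measurable_pi_apply).comp (measurable_id.prodMk (measurable_iterate_apply x n))

lemma measurableSet_setOf_apply_eq (x y : G) : MeasurableSet {f : G → G | f x = y} :=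
  measurableSet_eq_fun (measurable_pi_apply x) measurable_const

lemma measurable_orbitPrefix (v : G) (n : ℕ) : Measurable (orbitPrefix v n) :=
  measurable_pi_lambda _ fun k => measurable_iterate_apply v k

lemma measurableSet_orbitAvoids (S : Set G) (z : G) : MeasurableSet (orbitAvoids S z) := by
  simp only [orbitAvoids, Set.ofPred_forall]
  exact .iInter fun n => measurable_iterate_apply z n (MeasurableSet.of_discrete (s := Sᶜ))

lemma measurableSet_of_orbitPrefix_eq_imp {D : Set (G → G)} (v : G) (n : ℕ)
    (hD : ∀ ⦃f g⦄, orbitPrefix v n f = orbitPrefix v n g → f ∈ D → g ∈ D) :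
    MeasurableSet D := by
  have hpre : orbitPrefix v n ⁻¹' (orbitPrefix v n '' D) = D :=
    (Set.subset_preimage_image _ _).antisymm' fun _ ⟨f, hf, hfg⟩ => hD hfg hf
  exact hpre ▸ measurable_orbitPrefix v n .of_discrete

lemma measure_eq_tsum_inter_fiber {α β : Type*} [MeasurableSpace α] [Countable β]
    [MeasurableSpace β] [MeasurableSingletonClass β] (μ : Measure α) {g : α → β}
    (hg : Measurable g) {X : Set α} (hX : MeasurableSet X) :
    μ X = ∑' b, μ (X ∩ g ⁻¹' {b}) := by
  rw [← measure_iUnion (fun b b' hb => ((Set.disjoint_singleton.2 hb).preimage g).mono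
      Set.inter_subset_right Set.inter_subset_right)
    fun b => hX.inter (hg (measurableSet_singleton b)), ← Set.inter_iUnion,
    ← Set.preimage_iUnion, Set.iUnion_of_singleton, Set.preimage_univ, Set.inter_univ]

end OrbitEvents

section CycleFree

variable [MeasurableSpace G] [MeasurableSingletonClass G] {K : G → Measure G}

lemma nStep_succ_apply (K : G → Measure G) (n : ℕ) (x z : G) :
    nStep K (n + 1) x {z} = ∑' y, K x {y} * nStep K n y {z} := by
  simp [nStep, Measure.sum_apply _ (measurableSet_singleton z)]

lemma nStep_mul_nStep_le (K : G → Measure G) (a b : ℕ) (x w z : G) :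
    nStep K a x {w} * nStep K b w {z} ≤ nStep K (a + b) x {z} := by
  induction a generalizing x with
  | zero =>
    by_cases hxw : x = w
    · subst hxw; simp [nStep]
    · simp [nStep, hxw]
  | succ a ih =>
    rw [nStep_succ_apply, Nat.add_right_comm, nStep_succ_apply, ← ENNReal.tsum_mul_right]
    refine ENNReal.tsum_le_tsum fun y => (mul_assoc _ _ _).trans_le ?_
    gcongr
    exact ih y

variable [Countable G] {μ : Measure (G → G)} [IsProbabilityMeasure μ]

lemma IsCMTLaw.measure_injOn_iterate_le_nStep (hμ : IsCMTLaw K μ) (n : ℕ) (x z : G) :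
    μ {f | Set.InjOn (f^[·] x) (Set.Iio n) ∧ f^[n] x = z} ≤ nStep K n x {z} := by
  induction n generalizing x with
  | zero =>
    by_cases hxz : x = z
    · subst hxz; simp [nStep]
    · simp [hxz]
  | succ n ih =>
    -- `E y`: the path continues injectively from `y` without looking at the coordinate `x`
    let E (y : G) : Set (G → G) :=
      {f | Set.InjOn (f^[·] y) (Set.Iio n) ∧ f^[n] y = z ∧ ∀ k < n, f^[k] y ≠ x}
    have hE (y : G) : μ (E y ∩ {f | f x = y}) ≤ K x {y} * nStep K n y {z} := by
      have hdet ⦃f g : G → G⦄ (hfg : ∀ k ≤ n, f^[k] y = g^[k] y) (hf : f ∈ E y) : g ∈ E y :=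
        ⟨hf.1.congr fun k hk => hfg k (le_of_lt hk), hfg n le_rfl ▸ hf.2.1,
          fun k hk => hfg k hk.le ▸ hf.2.2 k hk⟩
      have hEm : MeasurableSet (E y) := measurableSet_of_orbitPrefix_eq_imp y n
        fun f g hfg => hdet fun k hk => congrFun hfg ⟨k, by omega⟩
      have hEx : DependsOn (· ∈ E y) {x}ᶜ := dependsOn_mem_of_forall_imp fun f g hfg hf =>
        hdet (fun k _ => iterate_eq_of_eqOn (fun _ h => hfg _ h)
          fun j hj => hf.2.2 j (by omega)) hf
      rw [hμ.measure_inter_eq_mul hEm (measurableSet_setOf_apply_eq x y) hEx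
        (dependsOn_setOf_apply_eq x y), hμ.measure_setOf_apply_eq, mul_comm]
      gcongr
      refine le_trans (measure_mono ?_) (ih y)
      exact fun f hf => ⟨hf.1, hf.2.1⟩
    have hsub : {f | Set.InjOn (f^[·] x) (Set.Iio (n + 1)) ∧ f^[n + 1] x = z} ⊆
        ⋃ y, E y ∩ {f | f x = y} := by
      rintro f ⟨hinj, hz⟩
      obtain ⟨hinj', hx⟩ := injOn_iterate_apply_of_injOn_succ hinj
      exact Set.mem_iUnion.2 ⟨f x, ⟨hinj', by rwa [← Function.iterate_succ_apply], hx⟩, rfl⟩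
    calc _ ≤ μ (⋃ y, E y ∩ {f | f x = y}) := measure_mono hsub
      _ ≤ ∑' y, μ (E y ∩ {f | f x = y}) := measure_iUnion_le _
      _ ≤ ∑' y, K x {y} * nStep K n y {z} := ENNReal.tsum_le_tsum hE
      _ = nStep K (n + 1) x {z} := (nStep_succ_apply K n x z).symm

lemma IsCMTLaw.ae_periodicPts_eq_empty (hμ : IsCMTLaw K μ) (hcf : CycleFree K) :
    ∀ᵐ f ∂μ, Function.periodicPts f = ∅ := by
  have hnull (x : G) : μ {f | x ∈ Function.periodicPts f} = 0 := by
    have hsub : {f | x ∈ Function.periodicPts f} ⊆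
        ⋃ m : ℕ, {f | Set.InjOn (f^[·] x) (Set.Iio (m + 1)) ∧ f^[m + 1] x = x} := by
      intro f hx
      have hm := Nat.sub_add_cancel (Function.minimalPeriod_pos_of_mem_periodicPts hx)
      refine Set.mem_iUnion.2 ⟨Function.minimalPeriod f x - 1, ?_⟩
      rw [hm]
      exact ⟨Function.iterate_injOn_Iio_minimalPeriod, Function.isPeriodicPt_minimalPeriod f x⟩
    refine measure_mono_null hsub (measure_iUnion_null fun m => nonpos_iff_eq_zero.1 ?_)
    exact (hμ.measure_injOn_iterate_le_nStep (m + 1) x x).trans_eq (hcf x (m + 1) m.succ_pos)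
  filter_upwards [ae_all_iff.2 fun x => measure_eq_zero_iff_ae_notMem.1 (hnull x)] with f hf
  exact Set.eq_empty_of_forall_notMem hf

lemma IsCMTLaw.measure_iterate_eq_le_nStep (hμ : IsCMTLaw K μ) (hcf : CycleFree K) (n : ℕ)
    (x z : G) : μ {f | f^[n] x = z} ≤ nStep K n x {z} := by
  refine (measure_mono_ae ?_).trans (hμ.measure_injOn_iterate_le_nStep n x z)
  filter_upwards [hμ.ae_periodicPts_eq_empty hcf] with f hf hz
  exact ⟨(injective_iterate_of_periodicPts_eq_empty hf x).injOn, hz⟩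

lemma IsCMTLaw.ae_iterate_ne (hμ : IsCMTLaw K μ) (hcf : CycleFree K) {x z : G} {d : ℕ}
    (hd : 1 ≤ d) (hxz : μ {f | f^[d] x = z} ≠ 0) : ∀ᵐ f ∂μ, ∀ m, f^[m] z ≠ x := by
  refine ae_all_iff.2 fun m => measure_eq_zero_iff_ae_notMem.1 (nonpos_iff_eq_zero.1 ?_)
  -- a return to `x` would close a cycle through `z` of positive probability
  have hcycle : nStep K d x {z} * nStep K m z {x} = 0 :=
    nonpos_iff_eq_zero.1 ((nStep_mul_nStep_le K d m x z x).trans_eq (hcf x (d + m) (by omega)))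
  have hzx : nStep K m z {x} = 0 := (mul_eq_zero.1 hcycle).resolve_left
    fun h => hxz (nonpos_iff_eq_zero.1 (h ▸ hμ.measure_iterate_eq_le_nStep hcf d x z))
  exact hzx ▸ hμ.measure_iterate_eq_le_nStep hcf m z x

lemma IsCMTLaw.ae_mem_orbitAvoids (hμ : IsCMTLaw K μ) (hcf : CycleFree K) {S : Set G} {z : G}
    (hS : ∀ p ∈ S, ∃ d, 1 ≤ d ∧ μ {f | f^[d] p = z} ≠ 0) :
    ∀ᵐ f ∂μ, f ∈ orbitAvoids S z := by
  have hp (p : G) : ∀ᵐ f ∂μ, p ∈ S → ∀ m, f^[m] z ≠ p := by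
    by_cases hpS : p ∈ S
    · obtain ⟨d, hd, hdp⟩ := hS p hpS
      exact (hμ.ae_iterate_ne hcf hd hdp).mono fun f hf _ => hf
    · exact ae_of_all _ fun f h => absurd h hpS
  filter_upwards [ae_all_iff.2 hp] with f hf n hn
  exact hf _ hn n rfl

lemma IsCMTLaw.ae_mem_orbitAvoids_of_fiber (hμ : IsCMTLaw K μ) (hcf : CycleFree K) {v : G}
    {n : ℕ} {e : Fin (n + 1) → G} (he : μ (orbitPrefix v n ⁻¹' {e}) ≠ 0) :
    ∀ᵐ f ∂μ, f ∈ orbitAvoids (Set.range fun k : Fin n => e k.castSucc) (e (Fin.last n)) := by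
  refine hμ.ae_mem_orbitAvoids hcf ?_
  rintro _ ⟨k, rfl⟩
  refine ⟨n - k, by omega, fun h0 => he (measure_mono_null (fun f hf => ?_) h0)⟩
  have hfe := congrFun (show orbitPrefix v n f = e from hf)
  show f^[n - k] (e k.castSucc) = e (Fin.last n)
  rw [← hfe k.castSucc, ← hfe (Fin.last n)]
  simp only [orbitPrefix, Fin.val_castSucc, Fin.val_last, ← Function.iterate_add_apply,
    Nat.sub_add_cancel k.is_lt.le]

end CycleFree

section TailBranch

variable [Countable G] [MeasurableSpace G] [MeasurableSingletonClass G] {K : G → Measure G}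
  {μ : Measure (G → G)} [IsProbabilityMeasure μ] {A : Set (G × (G → G))}

namespace IsTailBranchProperty

lemma measure_preimage_inter_orbitAvoids_inter (hA : IsTailBranchProperty A) (hμ : IsCMTLaw K μ)
    {S : Set G} (hS : S.Finite) (z : G) {E : Set (G → G)} (hE : MeasurableSet E)
    (hES : DependsOn (· ∈ E) S) :
    μ (Prod.mk z ⁻¹' A ∩ orbitAvoids S z ∩ E) =
      μ (Prod.mk z ⁻¹' A ∩ orbitAvoids S z) * μ E :=
  hμ.measure_inter_eq_mul
    ((measurable_prodMk_left hA.1.1).inter (measurableSet_orbitAvoids S z)) hE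
    (hA.dependsOn_inter_orbitAvoids hS z) hES

lemma measure_preimage_inter_eq_mul_of_ae_orbitAvoids (hA : IsTailBranchProperty A)
    (hμ : IsCMTLaw K μ) {S : Set G} (hS : S.Finite) {z : G}
    (hz : ∀ᵐ f ∂μ, f ∈ orbitAvoids S z) {E : Set (G → G)} (hE : MeasurableSet E)
    (hES : DependsOn (· ∈ E) S) :
    μ (Prod.mk z ⁻¹' A ∩ E) = μ (Prod.mk z ⁻¹' A) * μ E := by
  have hc : μ (orbitAvoids S z)ᶜ = 0 := ae_iff.1 hz
  calc μ (Prod.mk z ⁻¹' A ∩ E) = μ (Prod.mk z ⁻¹' A ∩ orbitAvoids S z ∩ E) := by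
        rw [Set.inter_right_comm, measure_inter_conull hc]
    _ = μ (Prod.mk z ⁻¹' A) * μ E := by
        rw [hA.measure_preimage_inter_orbitAvoids_inter hμ hS z hE hES, measure_inter_conull hc]

lemma measure_preimage_eq_tsum (hA : IsTailBranchProperty A) (hμ : IsCMTLaw K μ)
    (hcf : CycleFree K) (x : G) :
    μ (Prod.mk x ⁻¹' A) = ∑' y, K x {y} * μ (Prod.mk y ⁻¹' A) := by
  rw [measure_eq_tsum_inter_fiber μ (measurable_pi_apply x) (measurable_prodMk_left hA.1.1)]
  refine tsum_congr fun y => ?_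
  change μ (Prod.mk x ⁻¹' A ∩ {f | f x = y}) = _
  rw [hA.1.preimage_inter_eq (E := {f | f x = y}) fun f hf => .single (Or.inl hf)]
  by_cases hK : K x {y} = 0
  · rw [hK, zero_mul]
    exact measure_mono_null Set.inter_subset_right (hμ.measure_setOf_apply_eq x y ▸ hK)
  have hav : ∀ᵐ f ∂μ, f ∈ orbitAvoids {x} y := hμ.ae_mem_orbitAvoids hcf fun p hp =>
    ⟨1, le_rfl, by simpa [Set.mem_singleton_iff.1 hp, hμ.measure_setOf_apply_eq] using hK⟩
  rw [hA.measure_preimage_inter_eq_mul_of_ae_orbitAvoids hμ (Set.finite_singleton x) hav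
    (measurableSet_setOf_apply_eq x y) (dependsOn_setOf_apply_eq x y),
    hμ.measure_setOf_apply_eq, mul_comm]

lemma measure_preimage_eq_of_liouville (hA : IsTailBranchProperty A) (hμ : IsCMTLaw K μ)
    (hcf : CycleFree K) (hLiou : LiouvilleProperty K) (x y : G) :
    μ (Prod.mk x ⁻¹' A) = μ (Prod.mk y ⁻¹' A) := by
  have hbound (z : G) : |(μ (Prod.mk z ⁻¹' A)).toReal| ≤ 1 := by
    rw [abs_of_nonneg ENNReal.toReal_nonneg]
    simpa using ENNReal.toReal_mono one_ne_top (prob_le_one (μ := μ))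
  have hharm : IsKHarmonic K fun z => (μ (Prod.mk z ⁻¹' A)).toReal := fun z => by
    show (μ (Prod.mk z ⁻¹' A)).toReal = ∑' w, (K z {w}).toReal * (μ (Prod.mk w ⁻¹' A)).toReal
    rw [hA.measure_preimage_eq_tsum hμ hcf z, ENNReal.tsum_toReal_eq fun w => ENNReal.mul_ne_top
      (hμ.measure_setOf_apply_eq z w ▸ measure_ne_top μ _) (measure_ne_top μ _)]
    simp only [ENNReal.toReal_mul]
  exact (ENNReal.toReal_eq_toReal_iff' (measure_ne_top μ _) (measure_ne_top μ _)).1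
    (hLiou _ ⟨1, hbound⟩ hharm x y)

lemma measure_preimage_inter_fiber (hA : IsTailBranchProperty A) (hμ : IsCMTLaw K μ)
    (hcf : CycleFree K) (v : G) (n : ℕ) (e : Fin (n + 1) → G) :
    μ (Prod.mk v ⁻¹' A ∩ orbitPrefix v n ⁻¹' {e}) =
      μ (Prod.mk (e (Fin.last n)) ⁻¹' A) * μ (orbitPrefix v n ⁻¹' {e}) := by
  by_cases h0 : μ (orbitPrefix v n ⁻¹' {e}) = 0
  · rw [h0, mul_zero]
    exact measure_mono_null Set.inter_subset_right h0
  rw [hA.1.preimage_inter_eq fun f hf => sameComponent_of_mem_orbitPrefix_fiber hf]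
  exact hA.measure_preimage_inter_eq_mul_of_ae_orbitAvoids hμ (Set.finite_range _)
    (hμ.ae_mem_orbitAvoids_of_fiber hcf h0)
    (measurable_orbitPrefix v n (measurableSet_singleton e)) (dependsOn_orbitPrefix_fiber v n e)

lemma measure_preimage_inter_orbitPrefix_preimage (hA : IsTailBranchProperty A)
    (hμ : IsCMTLaw K μ) (hcf : CycleFree K) (hLiou : LiouvilleProperty K) (v : G) (n : ℕ)
    (Q : Set (Fin (n + 1) → G)) :
    μ (Prod.mk v ⁻¹' A ∩ orbitPrefix v n ⁻¹' Q) =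
      μ (Prod.mk v ⁻¹' A) * μ (orbitPrefix v n ⁻¹' Q) := by
  have hm := measurable_orbitPrefix (G := G) v n
  have hlaw : (μ.restrict (Prod.mk v ⁻¹' A)).map (orbitPrefix v n) =
      μ (Prod.mk v ⁻¹' A) • μ.map (orbitPrefix v n) := by
    refine Measure.ext_iff_singleton.2 fun e => ?_
    rw [Measure.map_apply hm (measurableSet_singleton e), Measure.smul_apply,
      Measure.map_apply hm (measurableSet_singleton e),
      Measure.restrict_apply (hm (measurableSet_singleton e)), Set.inter_comm,
      hA.measure_preimage_inter_fiber hμ hcf, smul_eq_mul,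
      hA.measure_preimage_eq_of_liouville hμ hcf hLiou _ v]
  calc μ (Prod.mk v ⁻¹' A ∩ orbitPrefix v n ⁻¹' Q)
      = (μ.restrict (Prod.mk v ⁻¹' A)).map (orbitPrefix v n) Q := by
        rw [Measure.map_apply hm .of_discrete, Measure.restrict_apply (hm .of_discrete),
          Set.inter_comm]
    _ = μ (Prod.mk v ⁻¹' A) * μ (orbitPrefix v n ⁻¹' Q) := by
        rw [hlaw, Measure.smul_apply, Measure.map_apply hm .of_discrete, smul_eq_mul]

lemma measure_preimage_inter_orbitAvoids (hA : IsTailBranchProperty A) (hμ : IsCMTLaw K μ)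
    (hcf : CycleFree K) (hLiou : LiouvilleProperty K) (S : Set G) (z : G) :
    μ (Prod.mk z ⁻¹' A ∩ orbitAvoids S z) = μ (Prod.mk z ⁻¹' A) * μ (orbitAvoids S z) := by
  let D (n : ℕ) : Set (G → G) := orbitPrefix z n ⁻¹' {e | ∀ k, e k ∉ S}
  have hD : orbitAvoids S z = ⋂ n, D n := by
    ext f
    simp only [orbitAvoids, D, orbitPrefix, Set.mem_iInter, Set.mem_preimage, Set.mem_ofPred_eq]
    exact ⟨fun h n k => h k, fun h n => h n (Fin.last n)⟩
  have hanti : Antitone D := fun m n hmn f hf k => hf (Fin.castLE (by omega) k)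
  have hDm (n : ℕ) : MeasurableSet (D n) := measurable_orbitPrefix z n .of_discrete
  have hA' := measurable_prodMk_left (x := z) hA.1.1
  have h₁ := tendsto_measure_iInter_atTop (μ := μ)
    (fun n => (hA'.inter (hDm n)).nullMeasurableSet)
    (fun m n hmn => Set.inter_subset_inter_right _ (hanti hmn)) ⟨0, measure_ne_top μ _⟩
  have h₂ := ENNReal.Tendsto.const_mul (tendsto_measure_iInter_atTop
    (fun n => (hDm n).nullMeasurableSet) hanti ⟨0, measure_ne_top μ _⟩)
    (Or.inr (measure_ne_top μ (Prod.mk z ⁻¹' A)))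
  rw [← Set.inter_iInter] at h₁
  rw [hD]
  exact tendsto_nhds_unique h₁ (h₂.congr fun n =>
    (hA.measure_preimage_inter_orbitPrefix_preimage hμ hcf hLiou z n _).symm)

/-- On the fiber, `A_v = A_z` for the endpoint `z`; the orbit of `z` a.s. never returns to the
prefix, so on the event that it avoids `t` too, `A_z` is decided off the coordinates that `E` and
the fiber depend on. -/
lemma measure_preimage_inter_fiber_inter_orbitAvoids (hA : IsTailBranchProperty A)
    (hμ : IsCMTLaw K μ) (hcf : CycleFree K) (hLiou : LiouvilleProperty K) (v : G)
    {t : Finset G} {E : Set (G → G)} (hE : MeasurableSet E) (hEt : DependsOn (· ∈ E) t)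
    (n : ℕ) (e : Fin (n + 1) → G) :
    μ (Prod.mk v ⁻¹' A ∩ E ∩ orbitPrefix v n ⁻¹' {e} ∩ orbitAvoids t (e (Fin.last n))) =
      μ (Prod.mk v ⁻¹' A) *
        μ (E ∩ orbitPrefix v n ⁻¹' {e} ∩ orbitAvoids t (e (Fin.last n))) := by
  set F := orbitPrefix v n ⁻¹' {e}
  set P := Set.range fun k : Fin n => e k.castSucc
  set z := e (Fin.last n)
  by_cases h0 : μ F = 0
  · have hnull (X : Set (G → G)) : μ (X ∩ F ∩ orbitAvoids t z) = 0 :=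
      measure_mono_null (fun f hf => hf.1.2) h0
    rw [hnull, hnull, mul_zero]
  have hconull (X : Set (G → G)) :
      μ (X ∩ orbitAvoids (↑t ∪ P) z) = μ (X ∩ orbitAvoids t z) := by
    rw [orbitAvoids_union, ← Set.inter_assoc,
      measure_inter_conull (ae_iff.1 (hμ.ae_mem_orbitAvoids_of_fiber hcf h0))]
  have hEF : MeasurableSet (E ∩ F) :=
    hE.inter (measurable_orbitPrefix v n (measurableSet_singleton e))
  have hEFdep : DependsOn (· ∈ E ∩ F) (↑t ∪ P) :=
    dependsOn_mem_of_forall_imp fun f g hfg hf => ⟨(hEt fun i hi => hfg i (.inl hi)).mp hf.1,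
      (dependsOn_orbitPrefix_fiber v n e fun i hi => hfg i (.inr hi)).mp hf.2⟩
  have hfin : (↑t ∪ P).Finite := t.finite_toSet.union (Set.finite_range _)
  calc μ (Prod.mk v ⁻¹' A ∩ E ∩ F ∩ orbitAvoids t z)
      = μ (Prod.mk z ⁻¹' A ∩ (E ∩ F) ∩ orbitAvoids t z) := by
        rw [Set.inter_assoc (Prod.mk v ⁻¹' A) E F, Set.inter_assoc,
          Set.inter_assoc (Prod.mk z ⁻¹' A), hA.1.preimage_inter_eq (z := z)
            fun f hf => sameComponent_of_mem_orbitPrefix_fiber hf.1.2]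
    _ = μ (Prod.mk z ⁻¹' A ∩ orbitAvoids (↑t ∪ P) z ∩ (E ∩ F)) := by
        rw [← hconull, Set.inter_right_comm]
    _ = μ (Prod.mk v ⁻¹' A) * (μ (orbitAvoids (↑t ∪ P) z) * μ (E ∩ F)) := by
        rw [hA.measure_preimage_inter_orbitAvoids_inter hμ hfin z hEF hEFdep,
          hA.measure_preimage_inter_orbitAvoids hμ hcf hLiou,
          hA.measure_preimage_eq_of_liouville hμ hcf hLiou z v, mul_assoc]
    _ = μ (Prod.mk v ⁻¹' A) * μ (E ∩ F ∩ orbitAvoids t z) := by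
        rw [← hμ.measure_inter_eq_mul (measurableSet_orbitAvoids _ _) hEF
          (dependsOn_orbitAvoids _ _) hEFdep, Set.inter_comm, hconull]

lemma measure_preimage_inter_eq_mul (hA : IsTailBranchProperty A) (hμ : IsCMTLaw K μ)
    (hcf : CycleFree K) (hLiou : LiouvilleProperty K) (v : G) {t : Finset G}
    {E : Set (G → G)} (hE : MeasurableSet E) (hEt : DependsOn (· ∈ E) t) :
    μ (Prod.mk v ⁻¹' A ∩ E) = μ (Prod.mk v ⁻¹' A) * μ E := by
  let W (T : ℕ) : Set (G → G) := {f | ∀ m, f^[m + T] v ∉ (t : Set G)}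
  have hWm (T : ℕ) : MeasurableSet (W T) := by
    simp only [W, Set.ofPred_forall]
    exact .iInter fun m =>
      measurable_iterate_apply v (m + T) (MeasurableSet.of_discrete (s := (t : Set G)ᶜ))
  have hWmono : Monotone W := fun T T' hTT' f hf m => by
    simpa only [show m + (T' - T) + T = m + T' by omega] using hf (m + (T' - T))
  have hWfiber (T : ℕ) (e : Fin (T + 1) → G) :
      W T ∩ orbitPrefix v T ⁻¹' {e} =
        orbitPrefix v T ⁻¹' {e} ∩ orbitAvoids t (e (Fin.last T)) := by
    rw [Set.inter_comm]
    refine Set.inter_congr_left (fun f ⟨hf, hW⟩ m => ?_) (fun f ⟨hf, hav⟩ m => ?_) <;>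
      have hfT : f^[T] v = e (Fin.last T) := congrFun hf (Fin.last T)
    · simpa only [Function.iterate_add_apply, hfT] using hW m
    · simpa only [Function.iterate_add_apply, hfT] using hav m
  have hWcover : μ (⋃ T, W T)ᶜ = 0 := by
    refine ae_iff.1 ((hμ.ae_periodicPts_eq_empty hcf).mono fun f hf => ?_)
    obtain ⟨N, hN⟩ := ((t.finite_toSet.preimage
      (injective_iterate_of_periodicPts_eq_empty hf v).injOn)).bddAbove
    exact Set.mem_iUnion.2 ⟨N + 1, fun m hm => absurd (hN hm) (by omega)⟩
  have hslice (T : ℕ) :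
      μ (Prod.mk v ⁻¹' A ∩ E ∩ W T) = μ (Prod.mk v ⁻¹' A) * μ (E ∩ W T) := by
    have hm := measurable_orbitPrefix v T
    rw [measure_eq_tsum_inter_fiber μ hm
        (((measurable_prodMk_left hA.1.1).inter hE).inter (hWm T)),
      measure_eq_tsum_inter_fiber μ hm (hE.inter (hWm T)), ← ENNReal.tsum_mul_left]
    refine tsum_congr fun e => ?_
    simp only [Set.inter_assoc _ (W T), hWfiber, ← Set.inter_assoc]
    exact hA.measure_preimage_inter_fiber_inter_orbitAvoids hμ hcf hLiou v hE hEt T e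
  have h₁ := tendsto_measure_iUnion_atTop (μ := μ)
    (fun _ _ h => Set.inter_subset_inter_right (Prod.mk v ⁻¹' A ∩ E) (hWmono h))
  have h₂ := ENNReal.Tendsto.const_mul (tendsto_measure_iUnion_atTop (μ := μ)
    (fun _ _ h => Set.inter_subset_inter_right E (hWmono h)))
    (Or.inr (measure_ne_top μ (Prod.mk v ⁻¹' A)))
  rw [← Set.inter_iUnion, measure_inter_conull hWcover] at h₁ h₂
  exact tendsto_nhds_unique h₁ (h₂.congr fun T => (hslice T).symm)

end IsTailBranchProperty

end TailBranch

open ProbabilityTheory in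
/-- A zero-one law of Kolmogorov type: the cylinder events generate the product σ-algebra, so `D`
is independent of itself. -/
lemma measure_eq_zero_or_one_of_forall_dependsOn {ι α : Type*} [MeasurableSpace α]
    {μ : Measure (ι → α)} [IsProbabilityMeasure μ] {D : Set (ι → α)} (hD : MeasurableSet D)
    (h : ∀ (s : Finset ι) (E : Set (ι → α)), MeasurableSet E → DependsOn (· ∈ E) s →
      μ (D ∩ E) = μ D * μ E) :
    μ D = 0 ∨ μ D = 1 := by
  have hind : Indep (MeasurableSpace.generateFrom {D})
      (MeasurableSpace.generateFrom (measurableCylinders fun _ => α)) μ := by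
    refine IndepSets.indep' (by simpa using hD) (fun _ => .of_mem_measurableCylinders)
      (.singleton D) isPiSystem_measurableCylinders ((IndepSets_iff _ _ μ).2 ?_)
    rintro _ _ rfl hE
    obtain ⟨s, S, hS, rfl⟩ := (mem_measurableCylinders _).1 hE
    exact h s _ (hS.cylinder) fun f g hfg => by
      simp only [mem_cylinder, show s.restrict f = s.restrict g from funext fun i => hfg i i.2]
  rw [generateFrom_measurableCylinders] at hind
  exact measure_eq_zero_or_one_of_indepSet_self ((indepSet_iff_measure_inter_eq_mul hD hD μ).2
    ((Indep_iff _ _ μ).1 hind D D (MeasurableSpace.measurableSet_generateFrom rfl) hD))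

lemma count_prod_eq_zero_and_ae_forall_notMem [Countable G] [MeasurableSpace G]
    [MeasurableSingletonClass G] {μ : Measure (G → G)} [SFinite μ] {A : Set (G × (G → G))}
    (hA : MeasurableSet A) (h : ∀ v, μ (Prod.mk v ⁻¹' A) = 0) :
    (Measure.count : Measure G).prod μ A = 0 ∧ ∀ᵐ f ∂μ, ∀ v : G, (v, f) ∉ A := by
  refine ⟨?_, ae_all_iff.2 fun v => measure_eq_zero_iff_ae_notMem.1 (h v)⟩
  rw [Measure.prod_apply hA]
  simp [h]

theorem cmt_components_indistinguishable_general
    [Countable G] [MeasurableSpace G] [MeasurableSingletonClass G]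
    (K : G → Measure G) (hcf : CycleFree K)
    (hLiou : LiouvilleProperty K)
    (μ : Measure (G → G)) [IsProbabilityMeasure μ] (hμ : IsCMTLaw K μ) :
    ∀ A : Set (G × (G → G)), IsTailBranchProperty A →
      (((Measure.count : Measure G).prod μ) A = 0 ∨
        ((Measure.count : Measure G).prod μ) Aᶜ = 0) ∧
      ((∀ᵐ f ∂μ, ∀ v : G, (v, f) ∈ A) ∨ (∀ᵐ f ∂μ, ∀ v : G, (v, f) ∉ A)) := by
  intro A hA
  have hAm := hA.1.1
  have h01 (v : G) : μ (Prod.mk v ⁻¹' A) = 0 ∨ μ (Prod.mk v ⁻¹' A) = 1 :=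
    measure_eq_zero_or_one_of_forall_dependsOn (measurable_prodMk_left hAm) fun _ _ hE hEs =>
      hA.measure_preimage_inter_eq_mul hμ hcf hLiou v hE hEs
  by_cases h1 : ∃ v, μ (Prod.mk v ⁻¹' A) = 1
  · obtain ⟨v, hv⟩ := h1
    have hc (x : G) : μ (Prod.mk x ⁻¹' Aᶜ) = 0 := by
      rw [Set.preimage_compl, prob_compl_eq_zero_iff (measurable_prodMk_left hAm),
        hA.measure_preimage_eq_of_liouville hμ hcf hLiou x v, hv]
    obtain ⟨hprod, hae⟩ := count_prod_eq_zero_and_ae_forall_notMem hAm.compl hc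
    exact ⟨.inr hprod, .inl (hae.mono fun f hf v => not_not.1 (hf v))⟩
  · obtain ⟨hprod, hae⟩ := count_prod_eq_zero_and_ae_forall_notMem hAm
      fun v => (h01 v).resolve_right (not_exists.1 h1 v)
    exact ⟨.inl hprod, .inr hae⟩

/-- For a cycle-free CMT with the Liouville property, the connected
components are indistinguishable by tail branch-properties. -/
theorem cmt_components_indistinguishable
    [Countable G] [MeasurableSpace G] [MeasurableSingletonClass G]
    (K : G → Measure G) (hK : ∀ x, IsProbabilityMeasure (K x)) (hcf : CycleFree K)
    (hLiou : LiouvilleProperty K)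
    (μ : Measure (G → G)) [IsProbabilityMeasure μ] (hμ : IsCMTLaw K μ) :
    ∀ A : Set (G × (G → G)), IsTailBranchProperty A →
      (((Measure.count : Measure G).prod μ) A = 0 ∨
        ((Measure.count : Measure G).prod μ) Aᶜ = 0) ∧
      ((∀ᵐ f ∂μ, ∀ v : G, (v, f) ∈ A) ∨ (∀ᵐ f ∂μ, ∀ v : G, (v, f) ∉ A)) :=
  cmt_components_indistinguishable_general K hcf hLiou μ hμ

end CMTPaper
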